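/- Let k ≥ 1, let G be a minimally k-edge-connected finite simple graph on V with |V| ≥ 2, fix a root r ∈ V, and let n_k(G) denote the number of vertices of G of degree k. Then the number of vertices of V that are not snug (this set includes r) is strictly less than 4·n_k(G). -/

import Mathlib

open Finset

variable {V : Type*} [Fintype V] [DecidableEq V]

/-- `Crosses S e`: exactly one endpoint of the edge/link `e` lies in `S`. -/
def Crosses (S : Finset V) (e : Sym2 V) : Prop :=
  ∃ x y : V, e = s(x, y) ∧ x ∈ S ∧ y ∉ S

instance (S : Finset V) : DecidablePred (Crosses S) := fun e =>
  decidable_of_iff (∃ x y : V, e = s(x, y) ∧ x ∈ S ∧ y ∉ S) Iff.rfl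

/-- The cut `δ(S)`: edges of `G` with exactly one endpoint in `S`. -/
def cutEdges (G : SimpleGraph V) [DecidableRel G.Adj] (S : Finset V) :
    Finset (Sym2 V) :=
  G.edgeFinset.filter fun e => Crosses S e

/-- `G` is `k`-edge-connected: every nonempty proper cut has at least `k` crossing edges. -/
def EdgeConnected (G : SimpleGraph V) [DecidableRel G.Adj] (k : ℕ) : Prop :=
  ∀ S : Finset V, S.Nonempty → S ≠ Finset.univ → k ≤ (cutEdges G S).card

/-- `S` is a `k`-cut: a nonempty proper vertex set with exactly `k` crossing edges. -/
def IsCut (G : SimpleGraph V) [DecidableRel G.Adj] (k : ℕ) (S : Finset V) : Prop :=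
  S.Nonempty ∧ S ≠ Finset.univ ∧ (cutEdges G S).card = k

/-- `(S₁, S₂)` are snug shores for `v` (with respect to the root `r`):
two `k`-cuts avoiding `r` with `v ∉ S₁` and `S₂ = S₁ ∪ {v}`. -/
def SnugShores (G : SimpleGraph V) [DecidableRel G.Adj] (k : ℕ) (r v : V)
    (S₁ S₂ : Finset V) : Prop :=
  IsCut G k S₁ ∧ IsCut G k S₂ ∧ r ∉ S₁ ∧ r ∉ S₂ ∧ v ∉ S₁ ∧ S₂ = insert v S₁

/-- `v` is a snug vertex (with respect to the root `r`). -/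
def Snug (G : SimpleGraph V) [DecidableRel G.Adj] (k : ℕ) (r v : V) : Prop :=
  v ≠ r ∧ k + 1 ≤ G.degree v ∧ ∃ S₁ S₂ : Finset V, SnugShores G k r v S₁ S₂

/-- A snug chain: snug vertices `u 0, …, u t` together with `k`-cuts
`S 0, …, S (t+1)` such that `(S i, S (i+1))` are snug shores for `u i`. -/
def IsSnugChain (G : SimpleGraph V) [DecidableRel G.Adj] (k : ℕ) (r : V)
    (t : ℕ) (u : ℕ → V) (S : ℕ → Finset V) : Prop :=
  ∀ i ≤ t, Snug G k r (u i) ∧ SnugShores G k r (u i) (S i) (S (i + 1))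

/-!
Call a `k`-cut avoiding the root a shore. By submodularity of the cut function, the shores
through a vertex `v` are closed under intersection, so if there are any, there is a least one,
`minShore v`; by posimodularity these minimal shores form a laminar family, i.e. a forest under
inclusion. Its leaves are singletons `{x}` with `deg x = k`: a larger shore contains an edge, and
the shore crossing that edge uncrosses with it into a smaller shore.

A non-snug vertex lies in no shore, or has degree `k`, or generates (has as its minimal shore) a
node with at least two children: if `v` is the only generator of `A` and `C` the only child, then
`A = insert v C` and `(C, A)` are snug shores for `v`. The vertices in no shore, and the
generators of a node, are independent, have degree `> k` (bar the root) and all their edges cross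
roots, respectively the node and its children, which are `k`-cuts. Hence there are at most `m`
vertices in no shore, `m ≥ 1` the number of roots, and at most as many generators of a node as
children. A forest with `l ≤ n_k` leaves has at most `2 (l - m)` children at its branching
nodes, so at most `m + n_k + 2 (n_k - m) < 4 n_k` vertices are not snug.
-/

set_option linter.unusedSectionVars false in
lemma crosses_mk_iff {S : Finset V} {x y : V} : Crosses S s(x, y) ↔ ¬(x ∈ S ↔ y ∈ S) := by
  constructor
  · rintro ⟨a, b, hab, ha, hb⟩
    rcases Sym2.eq_iff.mp hab with ⟨rfl, rfl⟩ | ⟨rfl, rfl⟩ <;> tauto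
  · intro h
    by_cases hx : x ∈ S
    · exact ⟨x, y, rfl, hx, by tauto⟩
    · exact ⟨y, x, Sym2.eq_swap, by tauto, hx⟩

section Cuts

variable (G : SimpleGraph V) [DecidableRel G.Adj]

lemma mem_cutEdges_mk {S : Finset V} {x y : V} :
    s(x, y) ∈ cutEdges G S ↔ G.Adj x y ∧ ¬(x ∈ S ↔ y ∈ S) := by
  simp [cutEdges, crosses_mk_iff]

lemma cutEdges_compl (S : Finset V) : cutEdges G Sᶜ = cutEdges G S := by
  refine filter_congr fun e _ => ?_
  induction e using Sym2.ind with
  | _ x y => simp only [crosses_mk_iff, mem_compl]; tauto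

lemma card_cutEdges_singleton (v : V) : #(cutEdges G {v}) = G.degree v := by
  rw [← SimpleGraph.card_incidenceFinset_eq_degree]
  congr 1
  ext e
  induction e using Sym2.ind with
  | _ x y =>
    rw [mem_cutEdges_mk, SimpleGraph.mem_incidenceFinset, SimpleGraph.mk'_mem_incidenceSet_iff]
    simp only [mem_singleton]
    constructor
    · rintro ⟨hxy, h⟩
      exact ⟨hxy, by tauto⟩
    · rintro ⟨hxy, rfl | rfl⟩
      · exact ⟨hxy, by simpa using hxy.ne'⟩
      · exact ⟨hxy, by simpa using hxy.ne⟩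

lemma card_cutEdges_inter_add_card_cutEdges_union_le (A B : Finset V) :
    #(cutEdges G (A ∩ B)) + #(cutEdges G (A ∪ B)) ≤ #(cutEdges G A) + #(cutEdges G B) := by
  simp only [cutEdges, card_filter, ← sum_add_distrib]
  refine sum_le_sum fun e _ => ?_
  induction e using Sym2.ind with
  | _ x y =>
    simp only [crosses_mk_iff, mem_inter, mem_union]
    by_cases x ∈ A <;> by_cases y ∈ A <;> by_cases x ∈ B <;> by_cases y ∈ B <;> simp [*]

lemma card_cutEdges_sdiff_add_card_cutEdges_sdiff_le (A B : Finset V) :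
    #(cutEdges G (A \ B)) + #(cutEdges G (B \ A)) ≤ #(cutEdges G A) + #(cutEdges G B) := by
  simp only [cutEdges, card_filter, ← sum_add_distrib]
  refine sum_le_sum fun e _ => ?_
  induction e using Sym2.ind with
  | _ x y =>
    simp only [crosses_mk_iff, mem_sdiff]
    by_cases x ∈ A <;> by_cases y ∈ A <;> by_cases x ∈ B <;> by_cases y ∈ B <;> simp [*]

lemma sum_degree_le_card_mul {k : ℕ} (Q : Finset V) (hQ : ∀ u ∈ Q, ∀ v ∈ Q, ¬G.Adj u v)
    (F : Finset (Finset V)) (hF : ∀ A ∈ F, #(cutEdges G A) ≤ k)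
    (hcross : ∀ v ∈ Q, ∀ w, G.Adj v w → ∃ A ∈ F, ¬(v ∈ A ↔ w ∈ A)) :
    ∑ v ∈ Q, G.degree v ≤ #F * k := calc
  ∑ v ∈ Q, G.degree v = #(Q.sigma fun v => G.neighborFinset v : Finset (Σ _ : V, V)) := by
    simp [card_sigma, SimpleGraph.card_neighborFinset_eq_degree]
  _ ≤ #(F.biUnion (cutEdges G)) := by
    refine card_le_card_of_injOn (fun p => s(p.1, p.2)) (fun p hp => ?_) (fun p hp q hq hpq => ?_)
    · simp only [coe_sigma, Set.mem_sigma_iff, mem_coe, SimpleGraph.mem_neighborFinset] at hp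
      obtain ⟨A, hA, hvw⟩ := hcross _ hp.1 _ hp.2
      exact mem_biUnion.mpr ⟨A, hA, (mem_cutEdges_mk G).mpr ⟨hp.2, hvw⟩⟩
    · simp only [coe_sigma, Set.mem_sigma_iff, mem_coe, SimpleGraph.mem_neighborFinset] at hp hq
      rcases Sym2.eq_iff.mp hpq with ⟨h1, h2⟩ | ⟨-, h2⟩
      · exact Sigma.ext h1 (heq_of_eq h2)
      · exact absurd (h2 ▸ hp.2) (hQ _ hp.1 _ hq.1)
  _ ≤ #F * k := card_biUnion_le_card_mul _ _ _ hF

end Cuts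

section Laminar

variable {α : Type*} [DecidableEq α] (F : Finset (Finset α))

def IsLaminar : Prop := ∀ A ∈ F, ∀ B ∈ F, (A ∩ B).Nonempty → A ⊆ B ∨ B ⊆ A

def children (A : Finset α) : Finset (Finset α) :=
  F.filter fun C => C ⊂ A ∧ ∀ D ∈ F, C ⊂ D → ¬D ⊂ A

def maximalSets : Finset (Finset α) := F.filter fun A => ∀ B ∈ F, ¬A ⊂ B

def minimalSets : Finset (Finset α) := F.filter fun A => ∀ B ∈ F, ¬B ⊂ A

variable {F}

lemma mem_children {A C : Finset α} :
    C ∈ children F A ↔ C ∈ F ∧ C ⊂ A ∧ ∀ D ∈ F, C ⊂ D → ¬D ⊂ A :=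
  mem_filter

lemma maximalSets_subset : maximalSets F ⊆ F := filter_subset _ _

lemma minimalSets_subset : minimalSets F ⊆ F := filter_subset _ _

lemma mem_minimalSets {A : Finset α} :
    A ∈ minimalSets F ↔ A ∈ F ∧ ∀ B ∈ F, ¬B ⊂ A :=
  mem_filter

lemma exists_mem_maximalSets_superset {B : Finset α} (hB : B ∈ F) :
    ∃ A ∈ maximalSets F, B ⊆ A := by
  obtain ⟨A, hBA, hA⟩ := F.exists_le_maximal hB
  exact ⟨A, mem_filter.mpr ⟨hA.prop, fun _ hC => hA.not_gt hC⟩, hBA⟩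

lemma exists_mem_children_superset {A B : Finset α} (hB : B ∈ F) (hBA : B ⊂ A) :
    ∃ C ∈ children F A, B ⊆ C := by
  obtain ⟨C, hBC, hC⟩ := (F.filter (· ⊂ A)).exists_le_maximal (mem_filter.mpr ⟨hB, hBA⟩)
  obtain ⟨hCF, hCA⟩ := mem_filter.mp hC.prop
  refine ⟨C, mem_filter.mpr ⟨hCF, hCA, fun D hD hCD hDA => ?_⟩, hBC⟩
  exact hC.not_gt (mem_filter.mpr ⟨hD, hDA⟩) hCD

lemma exists_mem_children_of_ssubset {A B : Finset α} (hA : A ∈ F) (hB : B ∈ F)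
    (hBA : B ⊂ A) :
    ∃ P ∈ F, B ∈ children F P := by
  obtain ⟨P, hPA, hP⟩ := (F.filter (B ⊂ ·)).exists_le_minimal (mem_filter.mpr ⟨hA, hBA⟩)
  obtain ⟨hPF, hBP⟩ := mem_filter.mp hP.prop
  refine ⟨P, hPF, mem_filter.mpr ⟨hB, hBP, fun D hD hBD hDP => ?_⟩⟩
  exact hP.not_lt (mem_filter.mpr ⟨hD, hBD⟩) hDP

lemma mem_minimalSets_of_children_eq_empty {A : Finset α} (hA : A ∈ F) (h : children F A = ∅) :
    A ∈ minimalSets F := by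
  refine mem_minimalSets.mpr ⟨hA, fun B hB hBA => ?_⟩
  obtain ⟨C, hC, -⟩ := exists_mem_children_superset hB hBA
  simp [h] at hC

lemma IsLaminar.pairwiseDisjoint_children (hF : IsLaminar F) (hne : ∀ A ∈ F, A.Nonempty) :
    (F : Set (Finset α)).PairwiseDisjoint (children F) := by
  intro A hA A' hA' hAA'
  refine disjoint_left.mpr fun C hC hC' => ?_
  obtain ⟨hCF, hCA, hCmax⟩ := mem_children.mp hC
  obtain ⟨-, hCA', hCmax'⟩ := mem_children.mp hC'
  obtain ⟨x, hx⟩ := hne C hCF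
  rcases hF A hA A' hA' ⟨x, mem_inter.mpr ⟨hCA.subset hx, hCA'.subset hx⟩⟩ with h | h
  · exact hCmax' A hA hCA (ssubset_of_subset_of_ne h hAA')
  · exact hCmax A' hA' hCA' (ssubset_of_subset_of_ne h (Ne.symm hAA'))

lemma IsLaminar.sum_card_children_add_card_maximalSets (hF : IsLaminar F)
    (hne : ∀ A ∈ F, A.Nonempty) :
    ∑ A ∈ F, #(children F A) + #(maximalSets F) = #F := by
  have hunion : F.biUnion (children F) = F \ maximalSets F := by
    ext B
    simp only [mem_biUnion, mem_sdiff, maximalSets, mem_filter, not_and, not_forall, not_not]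
    constructor
    · rintro ⟨A, hA, hB⟩
      obtain ⟨hBF, hBA, -⟩ := mem_children.mp hB
      exact ⟨hBF, fun _ => ⟨A, hA, hBA⟩⟩
    · rintro ⟨hB, hmax⟩
      obtain ⟨A, hA, hBA⟩ := hmax hB
      exact exists_mem_children_of_ssubset hA hB hBA
  rw [← card_biUnion (hF.pairwiseDisjoint_children hne), hunion]
  exact card_sdiff_add_card_eq_card (filter_subset _ _)

lemma IsLaminar.sum_card_children_add_le (hF : IsLaminar F) (hne : ∀ A ∈ F, A.Nonempty) :
    ∑ A ∈ F with 2 ≤ #(children F A), #(children F A) + 2 * #(maximalSets F) ≤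
      2 * #(minimalSets F) := by
  have hpoint : ∀ A ∈ F, (if 2 ≤ #(children F A) then #(children F A) else 0) + 2 ≤
      2 * #(children F A) + if A ∈ minimalSets F then 2 else 0 := by
    intro A hA
    by_cases h0 : children F A = ∅
    · simp [h0, mem_minimalSets_of_children_eq_empty hA h0]
    · have := card_pos.mpr (nonempty_iff_ne_empty.mpr h0)
      split_ifs <;> omega
  have hsum := sum_le_sum hpoint
  rw [sum_add_distrib, sum_add_distrib, ← sum_filter, ← sum_filter, ← mul_sum,
    filter_mem_eq_inter, inter_eq_right.mpr minimalSets_subset] at hsum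
  have := hF.sum_card_children_add_card_maximalSets hne
  simp only [sum_const, smul_eq_mul] at hsum
  omega

end Laminar

def EveryEdgeCrossesCut (G : SimpleGraph V) [DecidableRel G.Adj] (k : ℕ) : Prop :=
  ∀ e ∈ G.edgeSet, ∃ S : Finset V, IsCut G k S ∧ Crosses S e

def IsShore (G : SimpleGraph V) [DecidableRel G.Adj] (k : ℕ) (r : V) (S : Finset V) : Prop :=
  S.Nonempty ∧ r ∉ S ∧ #(cutEdges G S) = k

instance (G : SimpleGraph V) [DecidableRel G.Adj] (k : ℕ) (r : V) :
    DecidablePred (IsShore G k r) := fun _ => inferInstanceAs (Decidable (_ ∧ _ ∧ _))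

section Shores

variable {G : SimpleGraph V} [DecidableRel G.Adj] {k : ℕ} {r : V} {A B S : Finset V}

lemma EdgeConnected.le_card_cutEdges (hG : EdgeConnected G k) (hS : S.Nonempty) (hr : r ∉ S) :
    k ≤ #(cutEdges G S) :=
  hG S hS fun h => hr (h ▸ mem_univ r)

lemma EdgeConnected.le_degree (hG : EdgeConnected G k) (hV : 2 ≤ Fintype.card V) (v : V) :
    k ≤ G.degree v := by
  obtain ⟨w, hw⟩ := Fintype.exists_ne_of_one_lt_card hV v
  rw [← card_cutEdges_singleton]
  exact hG.le_card_cutEdges (singleton_nonempty v) (by simpa using hw)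

lemma IsShore.isCut (hS : IsShore G k r S) : IsCut G k S :=
  ⟨hS.1, fun h => hS.2.1 (h ▸ mem_univ r), hS.2.2⟩

lemma IsShore.inter (hG : EdgeConnected G k) (hA : IsShore G k r A) (hB : IsShore G k r B)
    (hAB : (A ∩ B).Nonempty) : IsShore G k r (A ∩ B) := by
  have h₁ := hG.le_card_cutEdges hAB (r := r) (by simp [hA.2.1])
  have h₂ := hG.le_card_cutEdges (hAB.mono inter_subset_union) (r := r) (by simp [hA.2.1, hB.2.1])
  have := card_cutEdges_inter_add_card_cutEdges_union_le G A B
  rw [hA.2.2, hB.2.2] at this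
  exact ⟨hAB, by simp [hA.2.1], by omega⟩

lemma IsShore.sdiff (hG : EdgeConnected G k) (hA : IsShore G k r A) (hB : IsShore G k r B)
    (hAB : (A \ B).Nonempty) (hBA : (B \ A).Nonempty) : IsShore G k r (A \ B) := by
  have h₁ := hG.le_card_cutEdges hAB (r := r) (by simp [hA.2.1])
  have h₂ := hG.le_card_cutEdges hBA (r := r) (by simp [hB.2.1])
  have := card_cutEdges_sdiff_add_card_cutEdges_sdiff_le G A B
  rw [hA.2.2, hB.2.2] at this
  exact ⟨hAB, by simp [hA.2.1], by omega⟩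

lemma isShore_singleton {v : V} (hv : v ≠ r) (hdeg : G.degree v = k) : IsShore G k r {v} :=
  ⟨singleton_nonempty v, by simpa using hv.symm, by rw [card_cutEdges_singleton, hdeg]⟩

/-- Complementing if necessary, the `k`-cut crossing the edge avoids `r`. -/
lemma exists_isShore_not_iff (hmin : EveryEdgeCrossesCut G k)
    {x y : V} (hxy : G.Adj x y) : ∃ S, IsShore G k r S ∧ ¬(x ∈ S ↔ y ∈ S) := by
  obtain ⟨S, ⟨hSne, hSuniv, hSk⟩, hcross⟩ := hmin s(x, y) hxy
  rw [crosses_mk_iff] at hcross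
  by_cases hr : r ∈ S
  · refine ⟨Sᶜ, ⟨?_, by simpa using hr, by rwa [cutEdges_compl]⟩, ?_⟩
    · exact nonempty_iff_ne_empty.mpr fun h => hSuniv ((compl_eq_empty_iff S).mp h)
    · rwa [mem_compl, mem_compl, not_iff_not]
  · exact ⟨S, ⟨hSne, hr, hSk⟩, hcross⟩

/-- A shore with two vertices contains an edge: otherwise its `≥ 2k` incident edge ends would
all leave it through only `k` edges. -/
lemma IsShore.exists_adj (hk : 1 ≤ k) (hG : EdgeConnected G k) (hV : 2 ≤ Fintype.card V)
    (hA : IsShore G k r A) (hcard : 1 < #A) : ∃ x ∈ A, ∃ y ∈ A, G.Adj x y := by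
  by_contra! hindep
  have hupper := sum_degree_le_card_mul G A hindep {A} (k := k) (by simp [hA.2.2])
    fun v hv w hvw => ⟨A, mem_singleton_self A, by simpa [hv] using (hindep v hv w · hvw)⟩
  have hlower : #A • k ≤ ∑ v ∈ A, G.degree v :=
    card_nsmul_le_sum _ _ _ fun v _ => hG.le_degree hV v
  rw [card_singleton] at hupper
  rw [smul_eq_mul] at hlower
  nlinarith

lemma IsShore.exists_ssubset (hk : 1 ≤ k) (hG : EdgeConnected G k) (hV : 2 ≤ Fintype.card V)
    (hmin : EveryEdgeCrossesCut G k)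
    (hA : IsShore G k r A) (hcard : 1 < #A) : ∃ B, IsShore G k r B ∧ B ⊂ A := by
  obtain ⟨x, hx, y, hy, hxy⟩ := hA.exists_adj hk hG hV hcard
  obtain ⟨T, hT, hxyT⟩ := exists_isShore_not_iff (r := r) hmin hxy
  obtain ⟨a, haA, haT, b, hbA, hbT⟩ : ∃ a ∈ A, a ∈ T ∧ ∃ b ∈ A, b ∉ T := by
    by_cases hxT : x ∈ T
    · exact ⟨x, hx, hxT, y, hy, by tauto⟩
    · exact ⟨y, hy, by tauto, x, hx, hxT⟩
  by_cases hTA : T ⊆ A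
  · exact ⟨T, hT, ssubset_of_subset_of_ne hTA fun h => hbT (h ▸ hbA)⟩
  · refine ⟨A \ T, hA.sdiff hG hT ⟨b, by simp [hbA, hbT]⟩ (sdiff_nonempty.mpr hTA), ?_⟩
    exact ssubset_of_subset_of_ne sdiff_subset fun h => (mem_sdiff.mp (h ▸ haA)).2 haT

end Shores

def Covered (G : SimpleGraph V) [DecidableRel G.Adj] (k : ℕ) (r : V) (v : V) : Prop :=
  ∃ S, IsShore G k r S ∧ v ∈ S

instance (G : SimpleGraph V) [DecidableRel G.Adj] (k : ℕ) (r : V) :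
    DecidablePred (Covered G k r) := fun _ => inferInstanceAs (Decidable (∃ _, _))

/-- Equal to `univ` when `v` lies in no shore. -/
def minShore (G : SimpleGraph V) [DecidableRel G.Adj] (k : ℕ) (r : V) (v : V) : Finset V :=
  (univ.filter fun S => IsShore G k r S ∧ v ∈ S).inf id

def minShores (G : SimpleGraph V) [DecidableRel G.Adj] (k : ℕ) (r : V) : Finset (Finset V) :=
  (univ.filter (Covered G k r)).image (minShore G k r)

def generators (G : SimpleGraph V) [DecidableRel G.Adj] (k : ℕ) (r : V) (A : Finset V) :
    Finset V :=
  univ.filter fun v => minShore G k r v = A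

section MinShores

variable {G : SimpleGraph V} [DecidableRel G.Adj] {k : ℕ} {r : V} {A S : Finset V} {u v : V}

lemma mem_minShore (v : V) : v ∈ minShore G k r v :=
  mem_inf.mpr fun _ hS => (mem_filter.mp hS).2.2

lemma minShore_subset (hS : IsShore G k r S) (hv : v ∈ S) : minShore G k r v ⊆ S :=
  inf_le (mem_filter.mpr ⟨mem_univ S, hS, hv⟩)

lemma Covered.isShore_minShore (hG : EdgeConnected G k) (hv : Covered G k r v) :
    IsShore G k r (minShore G k r v) := by
  obtain ⟨S, hS, hvS⟩ := hv
  have : minShore G k r v = univ ∨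
      IsShore G k r (minShore G k r v) ∧ v ∈ minShore G k r v := by
    refine inf_induction (p := fun T => T = univ ∨ IsShore G k r T ∧ v ∈ T) (Or.inl rfl)
      (fun A hA B hB => ?_) fun T hT => Or.inr (mem_filter.mp hT).2
    rcases hA with rfl | ⟨hA, hvA⟩
    · simpa using hB
    rcases hB with rfl | ⟨hB, hvB⟩
    · simpa using Or.inr ⟨hA, hvA⟩
    have hvAB : v ∈ A ∩ B := mem_inter.mpr ⟨hvA, hvB⟩
    exact Or.inr ⟨hA.inter hG hB ⟨v, hvAB⟩, hvAB⟩
  rcases this with h | h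
  · exact absurd (minShore_subset hS hvS (h ▸ mem_univ r)) hS.2.1
  · exact h.1

lemma Covered.minShore_mem_minShores (hv : Covered G k r v) :
    minShore G k r v ∈ minShores G k r :=
  mem_image_of_mem _ (mem_filter.mpr ⟨mem_univ v, hv⟩)

lemma mem_minShores :
    A ∈ minShores G k r ↔ ∃ v, Covered G k r v ∧ minShore G k r v = A := by
  simp [minShores]

lemma isShore_of_mem_minShores (hG : EdgeConnected G k) (hA : A ∈ minShores G k r) :
    IsShore G k r A := by
  obtain ⟨v, hv, rfl⟩ := mem_minShores.mp hA
  exact hv.isShore_minShore hG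

/-- Uncrossing by posimodularity: if neither of `u, v` lies in the other's minimal shore,
`minShore u \ minShore v` is a smaller shore through `u`. -/
lemma isLaminar_minShores (hG : EdgeConnected G k) : IsLaminar (minShores G k r) := by
  intro A hA B hB hAB
  obtain ⟨u, hu, rfl⟩ := mem_minShores.mp hA
  obtain ⟨v, hv, rfl⟩ := mem_minShores.mp hB
  by_cases huv : u ∈ minShore G k r v
  · exact Or.inl (minShore_subset (hv.isShore_minShore hG) huv)
  by_cases hvu : v ∈ minShore G k r u
  · exact Or.inr (minShore_subset (hu.isShore_minShore hG) hvu)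
  have hu' : u ∈ minShore G k r u \ minShore G k r v := mem_sdiff.mpr ⟨mem_minShore u, huv⟩
  have hsdiff := (hu.isShore_minShore hG).sdiff hG (hv.isShore_minShore hG)
    ⟨u, hu'⟩ ⟨v, mem_sdiff.mpr ⟨mem_minShore v, hvu⟩⟩
  obtain ⟨x, hx⟩ := hAB
  obtain ⟨hxu, hxv⟩ := mem_inter.mp hx
  exact absurd hxv (mem_sdiff.mp (minShore_subset hsdiff hu' hxu)).2

lemma exists_minShores_ssubset (hk : 1 ≤ k) (hG : EdgeConnected G k) (hV : 2 ≤ Fintype.card V)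
    (hmin : EveryEdgeCrossesCut G k)
    (hA : A ∈ minShores G k r) (hcard : 1 < #A) : ∃ B ∈ minShores G k r, B ⊂ A := by
  obtain ⟨B, hB, hBA⟩ := (isShore_of_mem_minShores hG hA).exists_ssubset hk hG hV hmin hcard
  obtain ⟨x, hx⟩ := hB.1
  exact ⟨_, Covered.minShore_mem_minShores ⟨B, hB, hx⟩,
    (minShore_subset hB hx).trans_ssubset hBA⟩

lemma not_covered_root : ¬Covered G k r r :=
  fun ⟨_, hS, hrS⟩ => hS.2.1 hrS

lemma covered_of_adj (hmin : EveryEdgeCrossesCut G k)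
    (huv : G.Adj u v) (hu : ¬Covered G k r u) : Covered G k r v := by
  obtain ⟨S, hS, hcross⟩ := exists_isShore_not_iff (r := r) hmin huv
  exact ⟨S, hS, by_contra fun hv => hcross (iff_of_false (fun h => hu ⟨S, hS, h⟩) hv)⟩

lemma not_adj_of_minShore_eq (hmin : EveryEdgeCrossesCut G k)
    (huv : minShore G k r u = minShore G k r v) : ¬G.Adj u v := by
  intro hadj
  obtain ⟨S, hS, hcross⟩ := exists_isShore_not_iff (r := r) hmin hadj
  have hS_of {a b : V} (hab : minShore G k r a = minShore G k r b) (ha : a ∈ S) : b ∈ S :=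
    minShore_subset hS ha (hab ▸ mem_minShore b)
  exact hcross ⟨hS_of huv, hS_of huv.symm⟩

lemma mem_generators : v ∈ generators G k r A ↔ minShore G k r v = A := by
  simp [generators]

lemma mem_of_mem_generators (hv : v ∈ generators G k r A) : v ∈ A :=
  mem_generators.mp hv ▸ mem_minShore v

lemma notMem_of_mem_generators_of_mem_children (hG : EdgeConnected G k)
    (hv : v ∈ generators G k r A) {C : Finset V} (hC : C ∈ children (minShores G k r) A) :
    v ∉ C := by
  obtain ⟨hCL, hCA, -⟩ := mem_children.mp hC
  intro hvC
  have := minShore_subset (isShore_of_mem_minShores hG hCL) hvC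
  rw [mem_generators.mp hv] at this
  exact hCA.not_subset this

lemma exists_mem_children_of_minShore_ne (hG : EdgeConnected G k) (hA : A ∈ minShores G k r)
    {x : V} (hx : x ∈ A) (hxA : minShore G k r x ≠ A) :
    ∃ C ∈ children (minShores G k r) A, x ∈ C := by
  have hxS := isShore_of_mem_minShores hG hA
  obtain ⟨C, hC, hxC⟩ :=
    exists_mem_children_superset (Covered.minShore_mem_minShores ⟨A, hxS, hx⟩)
      (ssubset_of_subset_of_ne (minShore_subset hxS hx) hxA)
  exact ⟨C, hC, hxC (mem_minShore x)⟩

end MinShores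

def uncovered (G : SimpleGraph V) [DecidableRel G.Adj] (k : ℕ) (r : V) : Finset V :=
  univ.filter fun v => ¬Covered G k r v

section Counting

variable {G : SimpleGraph V} [DecidableRel G.Adj] {k : ℕ} {r : V} {A : Finset V} {v : V}

lemma succ_le_degree (hG : EdgeConnected G k) (hV : 2 ≤ Fintype.card V) (hv : v ≠ r)
    (hsingle : ¬IsShore G k r {v}) : k + 1 ≤ G.degree v := by
  have := hG.le_degree hV v
  by_contra! hlt
  exact hsingle (isShore_singleton hv (by omega))

lemma card_generators_le (hG : EdgeConnected G k) (hV : 2 ≤ Fintype.card V)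
    (hmin : EveryEdgeCrossesCut G k)
    (hA : A ∈ minShores G k r) (hchild : (children (minShores G k r) A).Nonempty) :
    #(generators G k r A) ≤ #(children (minShores G k r) A) := by
  have hAS := isShore_of_mem_minShores hG hA
  have hcard : 1 < #A := by
    obtain ⟨C, hC⟩ := hchild
    have := card_lt_card (mem_children.mp hC).2.1
    have := card_pos.mpr (isShore_of_mem_minShores hG (mem_children.mp hC).1).1
    omega
  have hdeg : ∀ v ∈ generators G k r A, k + 1 ≤ G.degree v := by
    intro v hv
    have hvr : v ≠ r := fun h => hAS.2.1 (h ▸ mem_of_mem_generators hv)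
    refine succ_le_degree hG hV hvr fun hsingle => ?_
    have := card_le_card (minShore_subset hsingle (mem_singleton_self v))
    rw [mem_generators.mp hv, card_singleton] at this
    omega
  have hindep : ∀ u ∈ generators G k r A, ∀ v ∈ generators G k r A, ¬G.Adj u v :=
    fun u hu v hv => not_adj_of_minShore_eq hmin
      ((mem_generators.mp hu).trans (mem_generators.mp hv).symm)
  have hcuts : ∀ C ∈ insert A (children (minShores G k r) A), #(cutEdges G C) ≤ k := by
    intro C hC
    rcases mem_insert.mp hC with rfl | hC
    · exact hAS.2.2.le
    · exact (isShore_of_mem_minShores hG (mem_children.mp hC).1).2.2.le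
  have hupper := sum_degree_le_card_mul G _ hindep _ hcuts fun v hv w hvw => by
    by_cases hwA : w ∈ A
    · have hwA' : minShore G k r w ≠ A := fun h =>
        hindep v hv w (mem_generators.mpr h) hvw
      obtain ⟨C, hC, hwC⟩ := exists_mem_children_of_minShore_ne hG hA hwA hwA'
      have := notMem_of_mem_generators_of_mem_children hG hv hC
      exact ⟨C, mem_insert_of_mem hC, by tauto⟩
    · exact ⟨A, mem_insert_self _ _, by simp [mem_of_mem_generators hv, hwA]⟩
  have hlower := card_nsmul_le_sum _ _ _ hdeg
  have := card_insert_le A (children (minShores G k r) A)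
  rw [smul_eq_mul] at hlower
  nlinarith

lemma card_uncovered_le (hk : 1 ≤ k) (hG : EdgeConnected G k) (hV : 2 ≤ Fintype.card V)
    (hmin : EveryEdgeCrossesCut G k) :
    #(uncovered G k r) ≤ #(maximalSets (minShores G k r)) := by
  have hr : r ∈ uncovered G k r := mem_filter.mpr ⟨mem_univ r, not_covered_root⟩
  have hindep : ∀ u ∈ uncovered G k r, ∀ v ∈ uncovered G k r, ¬G.Adj u v :=
    fun u hu v hv huv => (mem_filter.mp hv).2 (covered_of_adj hmin huv (mem_filter.mp hu).2)
  have hupper := sum_degree_le_card_mul G _ hindep (maximalSets (minShores G k r)) (k := k)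
    (fun A hA => (isShore_of_mem_minShores hG (maximalSets_subset hA)).2.2.le) fun v hv w hvw => by
      have hw := covered_of_adj hmin hvw (mem_filter.mp hv).2
      obtain ⟨A, hA, hwA⟩ := exists_mem_maximalSets_superset hw.minShore_mem_minShores
      have hAS := isShore_of_mem_minShores hG (maximalSets_subset hA)
      exact ⟨A, hA, fun h => (mem_filter.mp hv).2 ⟨A, hAS, h.mpr (hwA (mem_minShore w))⟩⟩
  have hlower : #((uncovered G k r).erase r) • (k + 1) ≤
      ∑ v ∈ (uncovered G k r).erase r, G.degree v := by
    refine card_nsmul_le_sum _ _ _ fun v hv => succ_le_degree hG hV (ne_of_mem_erase hv) ?_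
    exact fun hsingle =>
      (mem_filter.mp (mem_of_mem_erase hv)).2 ⟨{v}, hsingle, mem_singleton_self v⟩
  rw [← add_sum_erase _ _ hr] at hupper
  rw [smul_eq_mul] at hlower
  rw [← card_erase_add_one hr]
  have := hG.le_degree hV r
  by_contra! hlt
  nlinarith [Nat.mul_le_mul_right (k + 1) (Nat.le_of_lt_succ hlt)]

lemma maximalSets_minShores_nonempty (hk : 1 ≤ k) (hG : EdgeConnected G k)
    (hV : 2 ≤ Fintype.card V) (hmin : EveryEdgeCrossesCut G k) :
    (maximalSets (minShores G k r)).Nonempty := by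
  obtain ⟨w, hw⟩ := (G.degree_pos_iff_exists_adj r).mp (hk.trans (hG.le_degree hV r))
  obtain ⟨A, hA, -⟩ :=
    exists_mem_maximalSets_superset (covered_of_adj hmin hw not_covered_root).minShore_mem_minShores
  exact ⟨A, hA⟩

lemma card_minimalSets_minShores_le (hk : 1 ≤ k) (hG : EdgeConnected G k)
    (hV : 2 ≤ Fintype.card V) (hmin : EveryEdgeCrossesCut G k) :
    #(minimalSets (minShores G k r)) ≤ #(univ.filter fun v => G.degree v = k) := by
  refine (card_le_card (t := (univ.filter fun v => G.degree v = k).image ({·}))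
    fun A hA => ?_).trans card_image_le
  obtain ⟨hAL, hAmin⟩ := mem_minimalSets.mp hA
  have hAS := isShore_of_mem_minShores hG hAL
  obtain ⟨x, rfl⟩ : ∃ x, A = {x} := by
    refine card_eq_one.mp (le_antisymm ?_ (card_pos.mpr hAS.1))
    by_contra! hcard
    obtain ⟨B, hB, hBA⟩ := exists_minShores_ssubset hk hG hV hmin hAL hcard
    exact hAmin B hB hBA
  exact mem_image.mpr ⟨x, by simpa [← card_cutEdges_singleton] using hAS.2.2, rfl⟩

end Counting

section NonSnug

variable {G : SimpleGraph V} [DecidableRel G.Adj] {k : ℕ} {r : V} {v : V}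

lemma two_le_card_children_of_not_snug (hk : 1 ≤ k) (hG : EdgeConnected G k)
    (hV : 2 ≤ Fintype.card V) (hmin : EveryEdgeCrossesCut G k)
    (hv : Covered G k r v) (hdeg : G.degree v ≠ k) (hsnug : ¬Snug G k r v) :
    2 ≤ #(children (minShores G k r) (minShore G k r v)) := by
  set A := minShore G k r v
  have hAL : A ∈ minShores G k r := hv.minShore_mem_minShores
  have hAS : IsShore G k r A := hv.isShore_minShore hG
  have hvr : v ≠ r := fun h => hAS.2.1 (h ▸ mem_minShore v)
  have hcard : 1 < #A := by
    by_contra! hcard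
    have hA : A = {v} := eq_singleton_iff_unique_mem.mpr
      ⟨mem_minShore v, fun y hy => card_le_one.mp hcard y hy v (mem_minShore v)⟩
    exact hdeg (by rw [← card_cutEdges_singleton, ← hA]; exact hAS.2.2)
  obtain ⟨C, hC⟩ : (children (minShores G k r) A).Nonempty := by
    obtain ⟨B, hB, hBA⟩ := exists_minShores_ssubset hk hG hV hmin hAL hcard
    obtain ⟨C, hC, -⟩ := exists_mem_children_superset hB hBA
    exact ⟨C, hC⟩
  by_contra! hlt
  have hchildren : children (minShores G k r) A = {C} :=
    eq_singleton_iff_unique_mem.mpr ⟨hC, fun D hD => card_le_one.mp (by omega) D hD C hC⟩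
  have hvgen : v ∈ generators G k r A := mem_generators.mpr rfl
  have hgen : generators G k r A = {v} := by
    have := (card_generators_le hG hV hmin hAL ⟨C, hC⟩).trans_eq
      (by rw [hchildren, card_singleton])
    exact eq_singleton_iff_unique_mem.mpr ⟨hvgen, fun u hu => card_le_one.mp this u hu v hvgen⟩
  have hCS := isShore_of_mem_minShores hG (mem_children.mp hC).1
  have hAeq : A = insert v C := by
    refine Subset.antisymm (fun x hx => ?_)
      (insert_subset (mem_minShore v) (mem_children.mp hC).2.1.subset)
    by_cases hxA : minShore G k r x = A
    · have hxv : x ∈ generators G k r A := mem_generators.mpr hxA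
      rw [hgen, mem_singleton] at hxv
      exact hxv ▸ mem_insert_self v C
    · obtain ⟨D, hD, hxD⟩ := exists_mem_children_of_minShore_ne hG hAL hx hxA
      rw [hchildren, mem_singleton] at hD
      exact mem_insert_of_mem (hD ▸ hxD)
  have hvdeg := succ_le_degree hG hV hvr fun h =>
    hdeg (by simpa [card_cutEdges_singleton] using h.2.2)
  exact hsnug ⟨hvr, hvdeg,
    C, A, hCS.isCut, hAS.isCut, hCS.2.1, hAS.2.1,
    notMem_of_mem_generators_of_mem_children hG hvgen hC, hAeq⟩

lemma mem_of_not_snug (hk : 1 ≤ k) (hG : EdgeConnected G k) (hV : 2 ≤ Fintype.card V)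
    (hmin : EveryEdgeCrossesCut G k) (hv : ¬Snug G k r v) :
    v ∈ uncovered G k r ∪ univ.filter (fun v => G.degree v = k) ∪
      ((minShores G k r).filter fun A => 2 ≤ #(children (minShores G k r) A)).biUnion
        (generators G k r) := by
  simp only [mem_union, mem_biUnion, mem_filter, mem_univ, true_and]
  by_cases hcov : Covered G k r v
  · by_cases hdeg : G.degree v = k
    · exact Or.inl (Or.inr hdeg)
    · exact Or.inr ⟨_, ⟨hcov.minShore_mem_minShores,
        two_le_card_children_of_not_snug hk hG hV hmin hcov hdeg hv⟩, mem_generators.mpr rfl⟩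
  · exact Or.inl (Or.inl (mem_filter.mpr ⟨mem_univ v, hcov⟩))

end NonSnug

/-- The number of non-snug vertices is less than four times the number of
vertices of degree `k`. -/
theorem num_non_snug_lt
    (k : ℕ) (hk : 1 ≤ k) (hV : 2 ≤ Fintype.card V)
    (G : SimpleGraph V) [DecidableRel G.Adj] (hG : EdgeConnected G k)
    (hmin : ∀ e ∈ G.edgeSet, ∃ S : Finset V, IsCut G k S ∧ Crosses S e)
    (r : V) :
    {v : V | ¬ Snug G k r v}.ncard < 4 * {v : V | G.degree v = k}.ncard := by
  set L := minShores G k r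
  set bad := L.filter fun A => 2 ≤ #(children L A)
  set Vk := univ.filter fun v => G.degree v = k
  have hgen : ∑ A ∈ bad, #(generators G k r A) ≤ ∑ A ∈ bad, #(children L A) :=
    sum_le_sum fun A hA => card_generators_le hG hV hmin (mem_filter.mp hA).1
      (card_pos.mp (zero_lt_two.trans_le (mem_filter.mp hA).2))
  have hforest : ∑ A ∈ bad, #(children L A) + 2 * #(maximalSets L) ≤ 2 * #(minimalSets L) :=
    (isLaminar_minShores hG).sum_card_children_add_le fun A hA => (isShore_of_mem_minShores hG hA).1
  have hleaves : #(minimalSets L) ≤ #Vk := card_minimalSets_minShores_le hk hG hV hmin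
  have hroots : 0 < #(maximalSets L) :=
    card_pos.mpr (maximalSets_minShores_nonempty hk hG hV hmin)
  rw [← coe_filter_univ (fun v => G.degree v = k), Set.ncard_coe_finset]
  calc {v | ¬Snug G k r v}.ncard
      ≤ #(uncovered G k r ∪ Vk ∪ bad.biUnion (generators G k r)) := by
        rw [← Set.ncard_coe_finset]
        exact Set.ncard_le_ncard fun v hv => mem_of_not_snug hk hG hV hmin hv
    _ ≤ #(uncovered G k r) + #Vk + ∑ A ∈ bad, #(generators G k r A) :=
        (card_union_le _ _).trans (add_le_add (card_union_le _ _) card_biUnion_le)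
    _ ≤ #(maximalSets L) + #Vk + ∑ A ∈ bad, #(children L A) := by
        gcongr
        exact card_uncovered_le hk hG hV hmin
    _ < 4 * #Vk := by omega
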